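/- arXiv:1803.09902 — 2 statements merged into one kernel-verified Lean document; each statement's English description precedes it below -/
import Mathlib

section
/- Let n, d be positive natural numbers, fix a slot i ∈ Fin d, let ε be a skew-Hermitian n×n complex matrix (εᴴ = −ε), let C : (Fin d → Fin n) → ℝ be a real kernel, and let T : (Fin d → Fin n) → ℂ be a tensor. Define the slot-i action of an n×n matrix A on T by (A_i T)_{p} = ∑_{q} A_{p_i q} T_{p_1,…,q,…,p_d} (q replacing the i-th index), and the quadratic form K(T) = ∑_{p} C(p) |T_{p}|². Then the derivative at t = 0 of t ↦ K(exp(tε)_i T) equals ∑_{p,p'} (∏_{j≠i} δ_{p_j p'_j}) conj(T_{p}) (C(p) − C(p')) ε_{p_i p'_i} T_{p'}. -/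
open scoped BigOperators

/-- Action of a matrix `A` on the `i`-th index slot of a `d`-index tensor. -/
noncomputable def slotAction {n d : ℕ} (i : Fin d) (A : Matrix (Fin n) (Fin n) ℂ)
    (T : (Fin d → Fin n) → ℂ) : (Fin d → Fin n) → ℂ :=
  fun p => ∑ q : Fin n, A (p i) q * T (Function.update p i q)

/-- The quadratic form `K(T) = ∑ₚ C(p) |T_p|²` (with `|z|² = conj z * z`). -/
noncomputable def quadForm {n d : ℕ} (C : (Fin d → Fin n) → ℝ)
    (T : (Fin d → Fin n) → ℂ) : ℂ :=
  ∑ p : Fin d → Fin n, (C p : ℂ) * (starRingEnd ℂ) (T p) * T p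

/-!
Let `δ(p, p')` be `1` when `p` and `p'` agree off slot `i` and `0` otherwise, so that
`(εᵢ T)_p = ∑_{p'} δ(p, p') ε_{pᵢ p'ᵢ} T_{p'}`. Since `exp(tε)ᵢ T = T + t εᵢ T + O(t²)`, the derivative
is `∑_p C(p) (conj((εᵢ T)_p) T_p + conj(T_p) (εᵢ T)_p)`. In the first term exchange `p` and `p'`:
`δ` is symmetric and `conj ε_{ab} = -ε_{ba}`, so it becomes `-∑ δ(p, p') conj(T_p) C(p') ε_{pᵢ p'ᵢ} T_{p'}`,
which combines with the second term into the factor `C(p) - C(p')`.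
-/

open Finset Function

theorem sum_prod_ite_eq_mul_eq_sum_update {ι α R : Type*} [Fintype ι] [DecidableEq ι]
    [Fintype α] [DecidableEq α] [CommSemiring R] (i : ι) (p : ι → α) (f : (ι → α) → R) :
    ∑ p', (∏ j ∈ univ.filter (· ≠ i), if p j = p' j then (1 : R) else 0) * f p'
      = ∑ q, f (update p i q) := by
  simp only [prod_boole, boole_mul, mem_filter, mem_univ, true_and]
  symm
  calc ∑ q, f (update p i q)
      = ∑ q, ∑ p', if p' = update p i q then f p' else 0 := by simp
    _ = _ := by
      rw [sum_comm]
      refine sum_congr rfl fun p' _ => ?_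
      simp only [eq_update_iff, ite_and]
      simp [eq_comm]

theorem Matrix.conj_apply_of_conjTranspose_eq_neg {m : Type*} {A : Matrix m m ℂ}
    (hA : A.conjTranspose = -A) (a b : m) : (starRingEnd ℂ) (A a b) = -A b a := by
  simpa using congrFun (congrFun hA b) a

section
-- Matrices carry no global norm; any normed-algebra structure gives the same derivative.
attribute [local instance] Matrix.linftyOpNormedRing Matrix.linftyOpNormedAlgebra

theorem hasDerivAt_exp_smul_apply_zero {m : Type*} [Fintype m] [DecidableEq m]
    (A : Matrix m m ℂ) (a b : m) :
    HasDerivAt (fun t : ℝ => NormedSpace.exp (t • A) a b) (A a b) 0 := by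
  have h := hasDerivAt_exp_smul_const (𝕂 := ℝ) A 0
  rw [zero_smul, NormedSpace.exp_zero, one_mul] at h
  exact (Matrix.entryLinearMap ℝ ℂ a b).toContinuousLinearMap.hasFDerivAt.comp_hasDerivAt 0 h

end

section
variable {n d : ℕ}

theorem slotAction_one (i : Fin d) (T : (Fin d → Fin n) → ℂ) : slotAction i 1 T = T := by
  ext p
  simp [slotAction, Matrix.one_apply]

theorem slotAction_eq_sum (i : Fin d) (A : Matrix (Fin n) (Fin n) ℂ)
    (T : (Fin d → Fin n) → ℂ) (p : Fin d → Fin n) :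
    slotAction i A T p = ∑ p', (∏ j ∈ univ.filter (· ≠ i),
      if p j = p' j then (1 : ℂ) else 0) * (A (p i) (p' i) * T p') := by
  rw [sum_prod_ite_eq_mul_eq_sum_update]
  simp only [slotAction, update_self]

theorem HasDerivAt.slotAction (i : Fin d) {E : ℝ → Matrix (Fin n) (Fin n) ℂ}
    {E' : Matrix (Fin n) (Fin n) ℂ} {t : ℝ}
    (hE : ∀ a b, HasDerivAt (fun s => E s a b) (E' a b) t)
    (T : (Fin d → Fin n) → ℂ) (p : Fin d → Fin n) :
    HasDerivAt (fun s => _root_.slotAction i (E s) T p) (_root_.slotAction i E' T p) t :=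
  HasDerivAt.fun_sum fun q _ => (hE (p i) q).mul_const _

theorem HasDerivAt.quadForm (C : (Fin d → Fin n) → ℝ)
    {F : ℝ → (Fin d → Fin n) → ℂ} {F' : (Fin d → Fin n) → ℂ} {t : ℝ}
    (hF : ∀ p, HasDerivAt (fun s => F s p) (F' p) t) :
    HasDerivAt (fun s => _root_.quadForm C (F s))
      (∑ p, (C p * (starRingEnd ℂ) (F' p) * F t p + C p * (starRingEnd ℂ) (F t p) * F' p)) t :=
  HasDerivAt.fun_sum fun p _ => ((hF p).star.const_mul _).mul (hF p)

theorem sum_conj_slotAction_mul_add_eq_of_conjTranspose_eq_neg (i : Fin d)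
    {ε : Matrix (Fin n) (Fin n) ℂ} (hε : ε.conjTranspose = -ε) (C : (Fin d → Fin n) → ℝ)
    (T : (Fin d → Fin n) → ℂ) :
    ∑ p, (C p * (starRingEnd ℂ) (slotAction i ε T p) * T p
        + C p * (starRingEnd ℂ) (T p) * slotAction i ε T p)
      = ∑ p, ∑ p', (∏ j ∈ univ.filter (· ≠ i), if p j = p' j then (1 : ℂ) else 0) *
          (starRingEnd ℂ) (T p) * ((C p : ℂ) - C p') * ε (p i) (p' i) * T p' := by
  have hadjoint : ∑ p, C p * (starRingEnd ℂ) (slotAction i ε T p) * T p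
      = ∑ p, ∑ p', (∏ j ∈ univ.filter (· ≠ i), if p j = p' j then (1 : ℂ) else 0) *
          (starRingEnd ℂ) (T p) * -(C p' : ℂ) * ε (p i) (p' i) * T p' := by
    simp only [slotAction_eq_sum i ε, map_sum, mul_sum, sum_mul]
    rw [sum_comm]
    refine sum_congr rfl fun p _ => sum_congr rfl fun p' _ => ?_
    simp only [map_mul, map_prod, apply_ite, map_one, map_zero,
      Matrix.conj_apply_of_conjTranspose_eq_neg hε, eq_comm (a := p' _)]
    ring
  rw [sum_add_distrib, hadjoint, ← sum_add_distrib]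
  simp only [slotAction_eq_sum i ε, mul_sum, ← sum_add_distrib]
  refine sum_congr rfl fun p _ => sum_congr rfl fun p' _ => ?_
  ring

end

theorem deriv_quadForm_exp_slotAction_general (n d : ℕ)
    (i : Fin d) (ε : Matrix (Fin n) (Fin n) ℂ) (hε : ε.conjTranspose = -ε)
    (C : (Fin d → Fin n) → ℝ) (T : (Fin d → Fin n) → ℂ) :
    deriv (fun t : ℝ => quadForm C (slotAction i (NormedSpace.exp (t • ε)) T)) 0
      = ∑ p : Fin d → Fin n, ∑ p' : Fin d → Fin n,
          (∏ j ∈ Finset.univ.filter (fun j : Fin d => j ≠ i),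
            (if p j = p' j then (1 : ℂ) else 0)) *
          (starRingEnd ℂ) (T p) * ((C p : ℂ) - (C p' : ℂ)) * ε (p i) (p' i) * T p' := by
  have hK := HasDerivAt.quadForm C
    (HasDerivAt.slotAction i (hasDerivAt_exp_smul_apply_zero ε) T)
  rw [hK.deriv, ← sum_conj_slotAction_mul_add_eq_of_conjTranspose_eq_neg i hε C T, zero_smul,
    NormedSpace.exp_zero, slotAction_one]

/-- Variation of the kinetic term under an infinitesimal unitary transformation in
slot `i`: the derivative at `t = 0` of `t ↦ K(exp(tε)ᵢ T)` is given by the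
commutator of the kernel `C` with the skew-Hermitian generator `ε`. -/
theorem deriv_quadForm_exp_slotAction (n d : ℕ) (hn : 0 < n) (hd : 0 < d)
    (i : Fin d) (ε : Matrix (Fin n) (Fin n) ℂ) (hε : ε.conjTranspose = -ε)
    (C : (Fin d → Fin n) → ℝ) (T : (Fin d → Fin n) → ℂ) :
    deriv (fun t : ℝ => quadForm C (slotAction i (NormedSpace.exp (t • ε)) T)) 0
      = ∑ p : Fin d → Fin n, ∑ p' : Fin d → Fin n,
          (∏ j ∈ Finset.univ.filter (fun j : Fin d => j ≠ i),
            (if p j = p' j then (1 : ℂ) else 0)) *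
          (starRingEnd ℂ) (T p) * ((C p : ℂ) - (C p' : ℂ)) * ε (p i) (p' i) * T p' :=
  deriv_quadForm_exp_slotAction_general n d i ε hε C T
end

section
/- Define, for real m > −1 and real λ with (1+m)² − π²λ ≠ 0, η(m,λ) = 4π²λ / ((1+m)² − π²λ) and β_λ(m,λ) = −2 η(m,λ) λ + (4π²λ² / (1+m)³)(1 + η(m,λ)/6). Then the limit as λ → 0 of β_λ(0,λ)/λ² equals −4π²; in particular there exists δ > 0 such that β_λ(0,λ) < 0 for all 0 < λ < δ (asymptotic freedom near the Gaussian fixed point). -/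
open Real Filter

/-- Anomalous dimension of the φ⁴ truncation. -/
noncomputable def eta (m lam : ℝ) : ℝ :=
  4 * π ^ 2 * lam / ((1 + m) ^ 2 - π ^ 2 * lam)

/-- Beta function of the dimensionless quartic melonic coupling. -/
noncomputable def betaLam (m lam : ℝ) : ℝ :=
  -2 * eta m lam * lam + (4 * π ^ 2 * lam ^ 2 / (1 + m) ^ 3) * (1 + eta m lam / 6)

/-! At `m = 0`, `η = 4π²λ / (1 - π²λ)`, and wherever `1 - π²λ ≠ 0` the beta function factors as
`β_λ(0, λ) = λ² · (-4π² (1 + π²λ/3) / (1 - π²λ))`. The second factor is continuous at `λ = 0`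
with value `-4π²`, which gives both the limit and the negative sign for small `λ > 0`. -/

open Topology

noncomputable def betaRatio (lam : ℝ) : ℝ :=
  -4 * π ^ 2 * (1 + π ^ 2 * lam / 3) / (1 - π ^ 2 * lam)

lemma betaLam_zero_eq_sq_mul_betaRatio {lam : ℝ} (hd : 1 - π ^ 2 * lam ≠ 0) :
    betaLam 0 lam = lam ^ 2 * betaRatio lam := by
  have hd' : ((1 : ℝ) + 0) ^ 2 - π ^ 2 * lam ≠ 0 := by simpa using hd
  simp only [betaLam, eta, betaRatio]
  field_simp
  ring

lemma eventually_one_sub_pi_sq_mul_ne_zero : ∀ᶠ lam : ℝ in 𝓝 0, 1 - π ^ 2 * lam ≠ 0 :=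
  (continuous_const.sub (continuous_const.mul continuous_id)).continuousAt.eventually_ne
    (by simp)

lemma tendsto_betaRatio_zero : Tendsto betaRatio (𝓝 0) (𝓝 (-(4 * π ^ 2))) := by
  have hcont : ContinuousAt betaRatio 0 := by
    unfold betaRatio
    exact ContinuousAt.div (by fun_prop) (by fun_prop) (by simp)
  simpa [betaRatio] using hcont.tendsto

/-- Asymptotic freedom near the Gaussian fixed point: `β_λ(0,λ)/λ² → −4π²` as
`λ → 0`, and in particular `β_λ(0,λ) < 0` for all sufficiently small `λ > 0`. -/
theorem asymptotic_freedom :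
    Tendsto (fun lam : ℝ => betaLam 0 lam / lam ^ 2) (nhdsWithin 0 {0}ᶜ)
        (nhds (-(4 * π ^ 2))) ∧
      ∃ δ : ℝ, 0 < δ ∧ ∀ lam : ℝ, 0 < lam → lam < δ → betaLam 0 lam < 0 := by
  have hfactor : ∀ᶠ lam : ℝ in 𝓝 0, betaLam 0 lam = lam ^ 2 * betaRatio lam :=
    eventually_one_sub_pi_sq_mul_ne_zero.mono fun _ => betaLam_zero_eq_sq_mul_betaRatio
  constructor
  · refine (tendsto_betaRatio_zero.mono_left nhdsWithin_le_nhds).congr' ?_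
    filter_upwards [nhdsWithin_le_nhds hfactor, self_mem_nhdsWithin] with lam hlam (h0 : lam ≠ 0)
    rw [hlam, mul_div_cancel_left₀ _ (pow_ne_zero 2 h0)]
  · have hneg : ∀ᶠ lam : ℝ in 𝓝 0, betaRatio lam < 0 :=
      tendsto_betaRatio_zero.eventually (gt_mem_nhds (neg_neg_of_pos (by positivity)))
    obtain ⟨δ, hδ, hball⟩ := Metric.eventually_nhds_iff.mp (hfactor.and hneg)
    refine ⟨δ, hδ, fun lam hpos hlt => ?_⟩
    obtain ⟨hlam, hratio⟩ := hball (by rwa [Real.dist_eq, sub_zero, abs_of_pos hpos])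
    rw [hlam]
    exact mul_neg_of_pos_of_neg (by positivity) hratio
end
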